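/- For a ring R, R is uniquely weakly J-clean if and only if R/J(R) is semi boolean and idempotents lift uniquely weakly modulo J(R). -/

import Mathlib

/-!
Modulo a two-sided ideal `I` (here `J(R)`), the condition `x - e ∈ I ∨ x + e ∈ I` says
`x ≡ ±e` with `e` idempotent, and `±e` squares to `±e`, so every element of `R/I` is semi
boolean. Conversely, if `x̄² = x̄` then `x` is idempotent modulo `I`, while if `x̄² = -x̄` then
`-x` is; since the lifting condition is symmetric under `x ↦ -x`, unique weak lifting of
idempotents gives the unique `e` in both cases.
-/

namespace TwoSidedIdeal

variable {R : Type*} [Ring R] (I : TwoSidedIdeal R)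

def UniqueWeakLift (x : R) : Prop :=
  ∃! e : R, IsIdempotentElem e ∧ (x - e ∈ I ∨ x + e ∈ I)

lemma coe_eq_coe_iff_sub_mem (x y : R) : (x : I.ringCon.Quotient) = y ↔ x - y ∈ I :=
  (RingCon.eq _).trans (I.rel_iff x y)

variable {I}

lemma neg_sub_mem_or_neg_add_mem_iff {x e : R} :
    (-x - e ∈ I ∨ -x + e ∈ I) ↔ (x - e ∈ I ∨ x + e ∈ I) := by
  rw [show -x - e = -(x + e) by abel, show -x + e = -(x - e) by abel, neg_mem_iff, neg_mem_iff,
    or_comm]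

lemma uniqueWeakLift_neg_iff {x : R} : I.UniqueWeakLift (-x) ↔ I.UniqueWeakLift x :=
  existsUnique_congr fun _ => and_congr_right fun _ => neg_sub_mem_or_neg_add_mem_iff

lemma sq_sub_mem_of_coe_sq_eq {x : R} (hx : (x : I.ringCon.Quotient) ^ 2 = x) : x ^ 2 - x ∈ I := by
  rwa [← coe_eq_coe_iff_sub_mem, RingCon.coe_pow]

lemma neg_sq_sub_mem_of_coe_sq_eq_neg {x : R} (hx : (x : I.ringCon.Quotient) ^ 2 = -x) :
    (-x) ^ 2 - -x ∈ I :=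
  sq_sub_mem_of_coe_sq_eq (by rw [RingCon.coe_neg, neg_sq, hx])

lemma coe_sq_eq_or_coe_sq_eq_neg {x e : R} (he : IsIdempotentElem e) (hxe : x - e ∈ I ∨ x + e ∈ I) :
    (x : I.ringCon.Quotient) ^ 2 = x ∨ (x : I.ringCon.Quotient) ^ 2 = -x := by
  have he' : IsIdempotentElem (e : I.ringCon.Quotient) := he.map I.ringCon.mk'
  rw [← sub_neg_eq_add, ← coe_eq_coe_iff_sub_mem, ← coe_eq_coe_iff_sub_mem, RingCon.coe_neg]
    at hxe
  rcases hxe with hx | hx <;> rw [hx]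
  · exact .inl (he'.pow_eq two_ne_zero)
  · exact .inr (by rw [neg_sq, neg_neg, he'.pow_eq two_ne_zero])

theorem forall_uniqueWeakLift_iff :
    (∀ x : R, I.UniqueWeakLift x) ↔
      (∀ y : I.ringCon.Quotient, y ^ 2 = y ∨ y ^ 2 = -y) ∧
        ∀ x : R, x ^ 2 - x ∈ I → I.UniqueWeakLift x := by
  refine ⟨fun h => ⟨fun y => ?_, fun x _ => h x⟩, fun ⟨hsb, hlift⟩ x => ?_⟩
  · obtain ⟨x, rfl⟩ := I.ringCon.mk'_surjective y
    obtain ⟨e, ⟨he, hxe⟩, -⟩ := h x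
    exact coe_sq_eq_or_coe_sq_eq_neg he hxe
  · rcases hsb x with hx | hx
    · exact hlift x (sq_sub_mem_of_coe_sq_eq hx)
    · exact uniqueWeakLift_neg_iff.1 (hlift (-x) (neg_sq_sub_mem_of_coe_sq_eq_neg hx))

end TwoSidedIdeal

/-- `R` is uniquely weakly `J`-clean if and only if `R/J(R)` is semi boolean and
idempotents lift uniquely weakly modulo `J(R)`. -/
theorem uniquelyWeaklyJClean_iff {R : Type*} [Ring R] :
    (∀ x : R, ∃! e : R, IsIdempotentElem e ∧
        (x - e ∈ TwoSidedIdeal.jacobson (⊥ : TwoSidedIdeal R) ∨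
          x + e ∈ TwoSidedIdeal.jacobson (⊥ : TwoSidedIdeal R))) ↔
      ((∀ y : (TwoSidedIdeal.jacobson (⊥ : TwoSidedIdeal R)).ringCon.Quotient,
          y ^ 2 = y ∨ y ^ 2 = -y) ∧
        ∀ x : R, x ^ 2 - x ∈ TwoSidedIdeal.jacobson (⊥ : TwoSidedIdeal R) →
          ∃! e : R, IsIdempotentElem e ∧
            (x - e ∈ TwoSidedIdeal.jacobson (⊥ : TwoSidedIdeal R) ∨
              x + e ∈ TwoSidedIdeal.jacobson (⊥ : TwoSidedIdeal R))) :=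
  TwoSidedIdeal.forall_uniqueWeakLift_iff
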